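/- For all nonnegative integers m and n, A_{1+2m}(n) := Σ_{k=1}^{n} C(2n, n−k) · k^(1+2m) satisfies A_{1+2m}(n) = (1/2) · C(2n, n) · Σ_{ℓ=0}^{m} (−1)^ℓ · ⟨n⟩_ℓ · ⟨n⟩_{ℓ+1} · σ_{m,ℓ}(n). -/

import Mathlib

/-!
Write `A_M(n)` for the moment on the left and `P_m(y)` for the sum over `ℓ` on the right
(`binomMoment M n` and `oddMomentPoly m y`).
Since `k² C(2n, n-k) = n² C(2n, n-k) - 2n(2n-1) C(2n-2, n-1-k)`, the moments satisfy
`A_{M+2}(n) = n² A_M(n) - 2n(2n-1) A_M(n-1)`, and `2n(2n-1) C(2n-2, n-1) = n² C(2n, n)`.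
Starting from `A_1(n) = n C(2n, n) / 2` (a telescoping sum), induction on `m` thus reduces the
theorem to the polynomial identity `P_{m+1}(y) = y² (P_m(y) - P_m(y-1))`. That identity follows
from `y ⟨y-1⟩_ℓ = ⟨y⟩_{ℓ+1}` and the two recursions of complete homogeneous symmetric
polynomials obtained by splitting off the last, respectively the first, variable.
-/

open Finset

/-- Falling factorial `⟨x⟩_n = x(x-1)⋯(x-n+1)`. -/
noncomputable def ffact (x : ℝ) : ℕ → ℝ
  | 0 => 1
  | n + 1 => ffact x n * (x - n)

/-- `σ_{m,ℓ}(y)`: the complete homogeneous symmetric polynomial of degree `m - ℓ`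
evaluated at `(y-0)^2, (y-1)^2, …, (y-ℓ)^2`, i.e. the sum over weakly increasing
sequences `0 ≤ k_1 ≤ ⋯ ≤ k_{m-ℓ} ≤ ℓ` of `∏ i, (y - k_i)^2`. -/
noncomputable def csigma (m ℓ : ℕ) (y : ℝ) : ℝ :=
  ∑ k ∈ Finset.univ.filter (fun k : Fin (m - ℓ) → Fin (ℓ + 1) => Monotone k),
    ∏ i, (y - (k i : ℝ)) ^ 2

section CompleteHomogeneous

variable {R : Type*} [CommSemiring R]

def completeHomogeneous (d : ℕ) {c : ℕ} (g : Fin c → R) : R :=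
  ∑ k ∈ univ.filter (fun k : Fin d → Fin c => Monotone k), ∏ i, g (k i)

@[simp]
lemma completeHomogeneous_zero {c : ℕ} (g : Fin c → R) : completeHomogeneous 0 g = 1 := by
  rw [completeHomogeneous, filter_true_of_mem fun k _ a => a.elim0]
  simp

@[simp]
lemma completeHomogeneous_add_one_fin_zero (d : ℕ) (g : Fin 0 → R) :
    completeHomogeneous (d + 1) g = 0 := by
  simp [completeHomogeneous]

lemma monotone_snoc_last {d c : ℕ} {k : Fin d → Fin (c + 1)} (hk : Monotone k) :
    Monotone (Fin.snoc k (Fin.last c) : Fin (d + 1) → Fin (c + 1)) := by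
  intro a b hab
  induction b using Fin.lastCases with
  | last => simpa using Fin.le_last _
  | cast j =>
    induction a using Fin.lastCases with
    | last => exact absurd hab (not_le.mpr (Fin.castSucc_lt_last j))
    | cast i => simpa using hk (Fin.castSucc_le_castSucc_iff.mp hab)

lemma completeHomogeneous_add_one_castSucc {d c : ℕ} (g : Fin (c + 1) → R) :
    completeHomogeneous (d + 1) g =
      completeHomogeneous (d + 1) (g ∘ Fin.castSucc) +
        g (Fin.last c) * completeHomogeneous d g := by
  classical
  rw [completeHomogeneous, ← sum_filter_add_sum_filter_not _ (fun k => k (Fin.last d) = Fin.last c),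
    add_comm, filter_filter, filter_filter, completeHomogeneous, completeHomogeneous, mul_sum]
  congr 1
  · refine (sum_bij (fun k _ => Fin.castSucc ∘ k) ?_ ?_ ?_ ?_).symm
    · intro k hk
      simp only [mem_filter, mem_univ, true_and] at hk ⊢
      exact ⟨Fin.strictMono_castSucc.monotone.comp hk, (Fin.castSucc_lt_last _).ne⟩
    · intro k _ k' _ h
      funext i
      exact Fin.castSucc_injective _ (congrFun h i)
    · intro k hk
      simp only [mem_filter, mem_univ, true_and] at hk
      have hlt : ∀ i, k i ≠ Fin.last c := fun i =>
        ((hk.1 (Fin.le_last i)).trans_lt (Fin.lt_last_iff_ne_last.mpr hk.2)).ne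
      refine ⟨fun i => (k i).castPred (hlt i), ?_, funext fun i => Fin.castSucc_castPred _ _⟩
      simp only [mem_filter, mem_univ, true_and]
      exact fun a b hab => Fin.castPred_le_castPred_iff.mpr (hk.1 hab)
    · intro k _
      rfl
  · refine (sum_bij (fun k _ => Fin.snoc k (Fin.last c)) ?_ ?_ ?_ ?_).symm
    · intro k hk
      simp only [mem_filter, mem_univ, true_and] at hk ⊢
      exact ⟨monotone_snoc_last hk, Fin.snoc_last _ _⟩
    · intro k _ k' _ h
      simpa using congrArg Fin.init h
    · intro k hk
      simp only [mem_filter, mem_univ, true_and] at hk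
      refine ⟨Fin.init k, ?_, by rw [← hk.2, Fin.snoc_init_self]⟩
      simp only [mem_filter, mem_univ, true_and]
      exact fun a b hab => hk.1 (Fin.castSucc_le_castSucc_iff.mpr hab)
    · intro k _
      rw [Fin.prod_univ_castSucc, mul_comm]
      simp

lemma completeHomogeneous_comp_rev (d : ℕ) {c : ℕ} (g : Fin c → R) :
    completeHomogeneous d (g ∘ Fin.rev) = completeHomogeneous d g := by
  refine sum_nbij' (fun k => Fin.rev ∘ k ∘ Fin.rev) (fun k => Fin.rev ∘ k ∘ Fin.rev)
    ?_ ?_ ?_ ?_ ?_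
  · intro k hk
    simp only [mem_filter, mem_univ, true_and] at hk ⊢
    exact Fin.rev_anti.comp (hk.comp_antitone Fin.rev_anti)
  · intro k hk
    simp only [mem_filter, mem_univ, true_and] at hk ⊢
    exact Fin.rev_anti.comp (hk.comp_antitone Fin.rev_anti)
  · intro k _
    funext i
    simp
  · intro k _
    funext i
    simp
  · intro k _
    exact (Equiv.prod_comp Fin.revPerm _).symm.trans (by simp)

lemma completeHomogeneous_add_one_succ {d c : ℕ} (g : Fin (c + 1) → R) :
    completeHomogeneous (d + 1) g =
      g 0 * completeHomogeneous d g + completeHomogeneous (d + 1) (g ∘ Fin.succ) := by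
  have hrev : g ∘ Fin.rev ∘ Fin.castSucc = (g ∘ Fin.succ) ∘ Fin.rev := by
    funext i
    simp [Fin.rev_castSucc]
  rw [← completeHomogeneous_comp_rev, completeHomogeneous_add_one_castSucc,
    completeHomogeneous_comp_rev, Function.comp_apply, Fin.rev_last, Function.comp_assoc, hrev,
    completeHomogeneous_comp_rev, add_comm]

end CompleteHomogeneous

lemma csigma_eq_completeHomogeneous (m ℓ : ℕ) (y : ℝ) :
    csigma m ℓ y = completeHomogeneous (m - ℓ) (fun j : Fin (ℓ + 1) => (y - j) ^ 2) :=
  rfl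

@[simp]
lemma csigma_self (m : ℕ) (y : ℝ) : csigma m m y = 1 := by
  simp [csigma_eq_completeHomogeneous]

lemma csigma_add_one_zero (m : ℕ) (y : ℝ) : csigma (m + 1) 0 y = y ^ 2 * csigma m 0 y := by
  simp only [csigma_eq_completeHomogeneous, Nat.sub_zero]
  rw [completeHomogeneous_add_one_castSucc]
  simp

lemma csigma_add_one_add_one {m ℓ : ℕ} (hℓ : ℓ < m) (y : ℝ) :
    csigma (m + 1) (ℓ + 1) y = csigma m ℓ y + (y - (ℓ + 1)) ^ 2 * csigma m (ℓ + 1) y := by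
  obtain ⟨d, rfl⟩ := Nat.exists_eq_add_of_lt hℓ
  simp only [csigma_eq_completeHomogeneous, show ℓ + d + 1 + 1 - (ℓ + 1) = d + 1 by omega,
    show ℓ + d + 1 - ℓ = d + 1 by omega, show ℓ + d + 1 - (ℓ + 1) = d by omega]
  rw [completeHomogeneous_add_one_castSucc]
  simp only [Fin.val_last]
  push_cast
  rfl

lemma csigma_sub_one {m ℓ : ℕ} (hℓ : ℓ < m) (y : ℝ) :
    csigma m ℓ (y - 1) = csigma m ℓ y + ((y - (ℓ + 1)) ^ 2 - y ^ 2) * csigma m (ℓ + 1) y := by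
  obtain ⟨d, rfl⟩ := Nat.exists_eq_add_of_lt hℓ
  simp only [csigma_eq_completeHomogeneous, show ℓ + d + 1 - ℓ = d + 1 by omega,
    show ℓ + d + 1 - (ℓ + 1) = d by omega]
  have hlast := completeHomogeneous_add_one_castSucc (d := d) (fun j : Fin (ℓ + 2) => (y - j) ^ 2)
  have hfirst := completeHomogeneous_add_one_succ (d := d) (fun j : Fin (ℓ + 2) => (y - j) ^ 2)
  have hshift : (fun j : Fin (ℓ + 2) => (y - j) ^ 2) ∘ Fin.succ =
      fun j : Fin (ℓ + 1) => (y - 1 - j) ^ 2 := by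
    funext j
    simp only [Function.comp_apply, Fin.val_succ]
    push_cast
    ring
  rw [hshift] at hfirst
  change _ = completeHomogeneous (d + 1) (fun j : Fin (ℓ + 1) => (y - j) ^ 2) + _ at hlast
  simp only [Fin.val_zero, Fin.val_last] at hlast hfirst
  push_cast at hlast hfirst
  linear_combination hlast - hfirst

lemma sum_mul_csigma_add_one (c : ℕ → ℝ) (m : ℕ) (y : ℝ) :
    ∑ ℓ ∈ range (m + 2), c ℓ * csigma (m + 1) ℓ y =
      ∑ ℓ ∈ range (m + 1), (c ℓ * (y - ℓ) ^ 2 + c (ℓ + 1)) * csigma m ℓ y := by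
  have hmid : ∑ ℓ ∈ range m, c (ℓ + 1) * csigma (m + 1) (ℓ + 1) y =
      ∑ ℓ ∈ range m, (c (ℓ + 1) * (y - (ℓ + 1 : ℕ)) ^ 2 * csigma m (ℓ + 1) y
        + c (ℓ + 1) * csigma m ℓ y) := by
    refine sum_congr rfl fun ℓ hℓ => ?_
    rw [csigma_add_one_add_one (mem_range.mp hℓ)]
    push_cast
    ring
  simp only [add_mul, sum_add_distrib]
  rw [sum_range_succ', sum_range_succ, hmid, sum_add_distrib,
    sum_range_succ' (fun ℓ => c ℓ * (y - ℓ) ^ 2 * csigma m ℓ y),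
    sum_range_succ (fun ℓ => c (ℓ + 1) * csigma m ℓ y), csigma_add_one_zero]
  simp only [Nat.cast_add, Nat.cast_one, csigma_self, mul_one, CharP.cast_eq_zero, sub_zero]
  ring

-- At `ℓ = 0` the truncated `c (0 - 1) = c 0` is multiplied by `(y - 0) ^ 2 - y ^ 2 = 0`.
lemma sum_mul_csigma_sub_one (c : ℕ → ℝ) (m : ℕ) (y : ℝ) :
    ∑ ℓ ∈ range (m + 1), c ℓ * csigma m ℓ (y - 1) =
      ∑ ℓ ∈ range (m + 1), (c ℓ + ((y - ℓ) ^ 2 - y ^ 2) * c (ℓ - 1)) * csigma m ℓ y := by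
  have hlow : ∑ ℓ ∈ range m, c ℓ * csigma m ℓ (y - 1) =
      ∑ ℓ ∈ range m, (c ℓ * csigma m ℓ y
        + ((y - (ℓ + 1 : ℕ)) ^ 2 - y ^ 2) * c (ℓ + 1 - 1) * csigma m (ℓ + 1) y) := by
    refine sum_congr rfl fun ℓ hℓ => ?_
    rw [csigma_sub_one (mem_range.mp hℓ), Nat.add_sub_cancel]
    push_cast
    ring
  simp only [add_mul, sum_add_distrib]
  rw [sum_range_succ, hlow, sum_add_distrib, sum_range_succ (fun ℓ => c ℓ * csigma m ℓ y),
    sum_range_succ' (fun ℓ => ((y - ℓ) ^ 2 - y ^ 2) * c (ℓ - 1) * csigma m ℓ y)]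
  simp only [Nat.cast_add, Nat.cast_one, add_tsub_cancel_right, csigma_self, mul_one,
    CharP.cast_eq_zero, sub_zero, sub_self, zero_tsub, zero_mul, add_zero]
  ring

lemma mul_ffact_sub_one (y : ℝ) (ℓ : ℕ) : y * ffact (y - 1) ℓ = ffact y (ℓ + 1) := by
  induction ℓ with
  | zero => simp [ffact]
  | succ ℓ ih =>
    rw [ffact, ffact, ← ih]
    push_cast
    ring

noncomputable def oddMomentCoeff (y : ℝ) (ℓ : ℕ) : ℝ :=
  (-1) ^ ℓ * ffact y ℓ * ffact y (ℓ + 1)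

noncomputable def oddMomentPoly (m : ℕ) (y : ℝ) : ℝ :=
  ∑ ℓ ∈ range (m + 1), oddMomentCoeff y ℓ * csigma m ℓ y

lemma sq_mul_oddMomentCoeff_sub_one (y : ℝ) (ℓ : ℕ) :
    y ^ 2 * oddMomentCoeff (y - 1) ℓ = -oddMomentCoeff y (ℓ + 1) := by
  rw [oddMomentCoeff, oddMomentCoeff, ← mul_ffact_sub_one y ℓ, ← mul_ffact_sub_one y (ℓ + 1),
    pow_succ]
  ring

lemma oddMomentPoly_zero (y : ℝ) : oddMomentPoly 0 y = y := by
  simp [oddMomentPoly, oddMomentCoeff, ffact]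

lemma oddMomentPoly_add_one (m : ℕ) (y : ℝ) :
    oddMomentPoly (m + 1) y = y ^ 2 * (oddMomentPoly m y - oddMomentPoly m (y - 1)) := by
  have hcoeff : ∀ ℓ, ((y - ℓ) ^ 2 - y ^ 2) * (y ^ 2 * oddMomentCoeff (y - 1) (ℓ - 1)) =
      -(((y - ℓ) ^ 2 - y ^ 2) * oddMomentCoeff y ℓ) := by
    rintro (_ | ℓ)
    · simp
    · rw [Nat.add_sub_cancel, sq_mul_oddMomentCoeff_sub_one]
      ring
  have hshift : y ^ 2 * oddMomentPoly m (y - 1) = ∑ ℓ ∈ range (m + 1),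
      (y ^ 2 * oddMomentCoeff (y - 1) ℓ
        + ((y - ℓ) ^ 2 - y ^ 2) * (y ^ 2 * oddMomentCoeff (y - 1) (ℓ - 1))) * csigma m ℓ y := by
    rw [oddMomentPoly, mul_sum, ← sum_mul_csigma_sub_one]
    simp only [mul_assoc]
  rw [oddMomentPoly, sum_mul_csigma_add_one, mul_sub, hshift, oddMomentPoly, mul_sum,
    ← sum_sub_distrib]
  refine sum_congr rfl fun ℓ _ => ?_
  rw [hcoeff, sq_mul_oddMomentCoeff_sub_one]
  ring

def binomMoment (M n : ℕ) : ℝ :=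
  ∑ k ∈ Icc 1 n, ((2 * n).choose (n - k) : ℝ) * (k : ℝ) ^ M

lemma choose_mul_eq_sub (N k : ℕ) (hk : k ≤ N) :
    ((2 * (N + 1)).choose (N + 1 - k) : ℝ) * k =
      ((N : ℝ) + 1) * ((2 * N + 1).choose (N + 1 - k) - (2 * N + 1).choose (N - k)) := by
  obtain ⟨j, rfl⟩ := Nat.exists_eq_add_of_le hk
  have hpascal := congrArg (Nat.cast : ℕ → ℝ) (Nat.choose_succ_succ' (2 * (k + j) + 1) j)
  have hmul := congrArg (Nat.cast : ℕ → ℝ) (Nat.add_one_mul_choose_eq (2 * (k + j) + 1) j)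
  rw [show k + j + 1 - k = j + 1 by omega, Nat.add_sub_cancel_left,
    show 2 * (k + j + 1) = 2 * (k + j) + 1 + 1 by ring]
  push_cast at hpascal hmul ⊢
  linear_combination ((k : ℝ) + j + 1) * hpascal + hmul

lemma sq_mul_choose_eq_sub (N k : ℕ) (hk : k ≤ N) :
    (k : ℝ) ^ 2 * ((2 * (N + 1)).choose (N + 1 - k) : ℝ) =
      ((N : ℝ) + 1) ^ 2 * ((2 * (N + 1)).choose (N + 1 - k) : ℝ) -
        2 * ((N : ℝ) + 1) * (2 * N + 1) * ((2 * N).choose (N - k) : ℝ) := by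
  obtain ⟨j, rfl⟩ := Nat.exists_eq_add_of_le hk
  have hmul := congrArg (Nat.cast : ℕ → ℝ) (Nat.add_one_mul_choose_eq (2 * (k + j) + 1) j)
  have hsucc := Nat.choose_mul_succ_eq (2 * (k + j)) j
  rw [show 2 * (k + j) + 1 - j = 2 * k + j + 1 by omega] at hsucc
  have hsucc' := congrArg (Nat.cast : ℕ → ℝ) hsucc
  rw [show k + j + 1 - k = j + 1 by omega, Nat.add_sub_cancel_left,
    show 2 * (k + j + 1) = 2 * (k + j) + 1 + 1 by ring]
  push_cast at hmul hsucc' ⊢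
  linear_combination (2 * (k : ℝ) + j + 1) * hmul + (2 * ((k : ℝ) + j) + 2) * hsucc'

lemma binomMoment_one (n : ℕ) : binomMoment 1 n = 1 / 2 * ((2 * n).choose n : ℝ) * n := by
  rcases n with _ | N
  · simp [binomMoment]
  have htele := sum_Ico_sub (fun k => ((2 * N + 1).choose (N + 1 - k) : ℝ)) (by omega : 1 ≤ N + 1)
  have hcentral := congrArg (Nat.cast : ℕ → ℝ) (Nat.add_one_mul_choose_eq (2 * N + 1) N)
  rw [Ico_add_one_right_eq_Icc] at htele
  rw [binomMoment, sum_Icc_succ_top (by omega : 1 ≤ N + 1),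
    sum_congr rfl fun k hk => by rw [pow_one, choose_mul_eq_sub N k (mem_Icc.mp hk).2],
    ← mul_sum]
  simp only [Nat.add_sub_add_right, Nat.sub_self, Nat.choose_zero_right, sum_sub_distrib,
    show 2 * (N + 1) = 2 * N + 1 + 1 by ring] at htele ⊢
  push_cast at htele hcentral ⊢
  linear_combination (-(N : ℝ) - 1) * htele + 1 / 2 * hcentral

lemma binomMoment_add_two (M N : ℕ) :
    binomMoment (M + 2) (N + 1) =
      ((N : ℝ) + 1) ^ 2 * binomMoment M (N + 1) -
        2 * ((N : ℝ) + 1) * (2 * N + 1) * binomMoment M N := by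
  have hterm : ∀ k ∈ Icc 1 N, ((2 * (N + 1)).choose (N + 1 - k) : ℝ) * (k : ℝ) ^ (M + 2) =
      ((N : ℝ) + 1) ^ 2 * (((2 * (N + 1)).choose (N + 1 - k) : ℝ) * (k : ℝ) ^ M) -
        2 * ((N : ℝ) + 1) * (2 * N + 1) * (((2 * N).choose (N - k) : ℝ) * (k : ℝ) ^ M) := by
    intro k hk
    rw [pow_add]
    linear_combination (k : ℝ) ^ M * sq_mul_choose_eq_sub N k (mem_Icc.mp hk).2
  rw [binomMoment, binomMoment, binomMoment, sum_Icc_succ_top (by omega : 1 ≤ N + 1),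
    sum_Icc_succ_top (by omega : 1 ≤ N + 1), sum_congr rfl hterm, sum_sub_distrib,
    ← mul_sum, ← mul_sum]
  simp only [tsub_self, Nat.choose_zero_right, Nat.cast_one, Nat.cast_add, one_mul]
  ring

theorem A_odd_moment (m n : ℕ) :
    ∑ k ∈ Finset.Icc 1 n, (((2 * n).choose (n - k) : ℝ)) * (k : ℝ) ^ (1 + 2 * m) =
      (1 / 2) * (((2 * n).choose n : ℝ)) *
        ∑ ℓ ∈ Finset.range (m + 1),
          (-1 : ℝ) ^ ℓ * ffact (n : ℝ) ℓ * ffact (n : ℝ) (ℓ + 1) * csigma m ℓ (n : ℝ) := by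
  change binomMoment (1 + 2 * m) n = 1 / 2 * ((2 * n).choose n : ℝ) * oddMomentPoly m n
  induction m generalizing n with
  | zero => simpa [oddMomentPoly_zero] using binomMoment_one n
  | succ m ih =>
    rcases n with _ | N
    · simp [binomMoment, oddMomentPoly_add_one]
    have hcentral := congrArg (fun x : ℕ => ((N + 1) * x : ℝ)) (Nat.succ_mul_centralBinom_succ N)
    simp only [Nat.centralBinom_eq_two_mul_choose] at hcentral
    rw [show 1 + 2 * (m + 1) = 1 + 2 * m + 2 by ring, binomMoment_add_two, ih, ih,
      oddMomentPoly_add_one]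
    push_cast at hcentral ⊢
    rw [add_sub_cancel_right]
    linear_combination (1 / 2 * oddMomentPoly m N) * hcentral
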